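/- Let Γ be a finite undirected simple graph on n vertices whose maximal vertex degree equals n−2 and such that exactly one vertex has degree n−2. Then G_Γ has the R_∞-property, i.e. R(φ) = ∞ for every automorphism φ of G_Γ. -/

import Mathlib

/-- Non-adjacent pairs `(i,j)` with `i < j`. -/
abbrev NonEdge {V : Type} [LinearOrder V] (Γ : SimpleGraph V) : Type :=
  {p : V × V // p.1 < p.2 ∧ ¬ Γ.Adj p.1 p.2}

abbrev GraphGens {V : Type} [LinearOrder V] (Γ : SimpleGraph V) : Type := V ⊕ NonEdge Γ

open scoped commutatorElement

/-- The relations of the 2-step nilpotent group associated to a graph. -/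
def GraphRels {V : Type} [LinearOrder V] (Γ : SimpleGraph V) : Set (FreeGroup (GraphGens Γ)) :=
  {r | (∃ i j : V, Γ.Adj i j ∧
      r = ⁅(FreeGroup.of (Sum.inl j) : FreeGroup (GraphGens Γ)), FreeGroup.of (Sum.inl i)⁆) ∨
    (∃ p : NonEdge Γ,
      r = ⁅(FreeGroup.of (Sum.inl p.1.2) : FreeGroup (GraphGens Γ)), FreeGroup.of (Sum.inl p.1.1)⁆ *
        (FreeGroup.of (Sum.inr p))⁻¹) ∨
    (∃ (l : V) (p : NonEdge Γ),
      r = ⁅(FreeGroup.of (Sum.inl l) : FreeGroup (GraphGens Γ)), FreeGroup.of (Sum.inr p)⁆)}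

/-- The 2-step nilpotent group associated to a graph. -/
abbrev GraphGroup {V : Type} [LinearOrder V] (Γ : SimpleGraph V) : Type :=
  PresentedGroup (GraphRels Γ)

/-- The generator of `GraphGroup Γ` corresponding to the vertex `i`. -/
def xg {V : Type} [LinearOrder V] (Γ : SimpleGraph V) (i : V) : GraphGroup Γ :=
  PresentedGroup.of (Sum.inl i)

/-- The central generator of `GraphGroup Γ` corresponding to a non-adjacent pair. -/
def yg {V : Type} [LinearOrder V] (Γ : SimpleGraph V) (p : NonEdge Γ) : GraphGroup Γ :=
  PresentedGroup.of (Sum.inr p)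

/-- Twisted conjugacy: `a = c * b * (φ c)⁻¹` for some `c`. -/
def TwistedConj {G : Type*} [Group G] (φ : G →* G) (a b : G) : Prop :=
  ∃ c : G, a = c * b * (φ c)⁻¹

/-- The Reidemeister number of an endomorphism: the number of twisted conjugacy
classes, as an element of `ℕ∞`. -/
noncomputable def reidemeisterNumber {G : Type*} [Group G] (φ : G →* G) : ℕ∞ :=
  ENat.card (Quot (TwistedConj φ))

/-- The Reidemeister spectrum of a group. -/
noncomputable def reidemeisterSpectrum (G : Type*) [Group G] : Set ℕ∞ :=
  {r : ℕ∞ | ∃ φ : G ≃* G, r = reidemeisterNumber φ.toMonoidHom}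

/-- `|x|_∞ : ℤ → ℕ∞`. -/
def natAbsInfty (x : ℤ) : ℕ∞ := if x = 0 then ⊤ else (x.natAbs : ℕ∞)

/-- A graph is a (simplicial) join if its vertex set can be partitioned in two
nonempty parts such that all pairs of vertices in different parts are adjacent. -/
def IsJoinGraph {V : Type*} (Γ : SimpleGraph V) : Prop :=
  ∃ A B : Set V, A.Nonempty ∧ B.Nonempty ∧ Disjoint A B ∧ A ∪ B = Set.univ ∧
    ∀ a ∈ A, ∀ b ∈ B, Γ.Adj a b

/-!
Send `G_Γ` to the central extension `BilinExt (cocycle Γ)` of `ℤⁿ` by `ℤ^{non-edges}`,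
`x_i ↦ (e_i, 0)`, `y_p ↦ (0, e_p)`. This gives coordinates in which an automorphism `φ` acts on
the abelianisation by a matrix `A` and on the subgroup generated by the `y_p`, which is the
kernel of the first coordinate, by the matrix `C` of `2 × 2` minors of `A`. Since `φ` preserves
the relations `⁅x_i, x_j⁆ = 1`, the minors of `A` with rows a non-edge and columns an edge vanish.

If `A` fixes a nonzero vector, so does its transpose, and a nonzero `g` with `g A = g` makes
`h ↦ g ⬝ᵥ coordX h` constant on twisted classes but unbounded on the powers of some `x_i`.
Otherwise, let `v` be the vertex of degree `n - 2` and `w` its only non-neighbour. Multiplying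
the vanishing minors by `A⁻¹` shows that column `v` of `A` is `±e_v` (every other vertex has two
non-neighbours) and then that row `w` is `±e_w`. A sign `+1` would give a fixed vector, so both
are `-1` and `C` fixes `e_{vw}`. A nonzero `g` with `g C = g` then separates the powers of
`y_{vw}`: a twisted conjugator of two elements of the `y`-subgroup has first coordinate fixed by
`A`, hence zero, so it lies in that subgroup as well, where `φ` acts by `C`.
-/

open Matrix

section Reidemeister

variable {G : Type*} [Group G] (φ : G →* G)

theorem twistedConj_equivalence : Equivalence (TwistedConj φ) where
  refl a := ⟨1, by simp⟩
  symm := by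
    rintro a b ⟨c, rfl⟩
    exact ⟨c⁻¹, by simp [mul_assoc]⟩
  trans := by
    rintro a b c ⟨d, rfl⟩ ⟨e, rfl⟩
    exact ⟨d * e, by simp [mul_assoc]⟩

theorem reidemeisterNumber_eq_top_of_injective {ι : Type*} [Infinite ι] (t : ι → G)
    (ht : ∀ i j, TwistedConj φ (t i) (t j) → i = j) : reidemeisterNumber φ = ⊤ := by
  have : Infinite (Quot (TwistedConj φ)) :=
    Infinite.of_injective (fun i => Quot.mk _ (t i)) fun i j hij =>
      ht i j ((twistedConj_equivalence φ).eqvGen_iff.mp (Quot.eq.mp hij))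
  exact ENat.card_eq_top_of_infinite

end Reidemeister

namespace Matrix

variable {ι R : Type*} [Fintype ι] [CommRing R]

theorem dotProduct_sub_mulVec_eq_zero {M : Matrix ι ι R} {g : ι → R} (hg : g ᵥ* M = g)
    (a : ι → R) : g ⬝ᵥ (a - M *ᵥ a) = 0 := by
  rw [dotProduct_sub, dotProduct_mulVec, hg, sub_self]

theorem mul_apply_eq_mul_of_col {M N : Matrix ι ι R} {v : ι} (h : ∀ k, k ≠ v → N k v = 0) :
    (M * N) v v = M v v * N v v :=
  Finset.sum_eq_single v (fun k _ hk => by simp [h k hk]) (by simp)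

theorem mul_apply_eq_mul_of_row {M N : Matrix ι ι R} {w : ι} (h : ∀ j, j ≠ w → M w j = 0) :
    (M * N) w w = M w w * N w w :=
  Finset.sum_eq_single w (fun j _ hj => by simp [h j hj]) (by simp)

variable [DecidableEq ι]

theorem row_vecMul_of_mul_eq_one {M N : Matrix ι ι R} (h : M * N = 1) (i : ι) :
    M i ᵥ* N = Pi.single i 1 := by
  funext j
  rw [← mul_apply_eq_vecMul, h, one_eq_pi_single]

theorem exists_vecMul_eq_self_iff [IsDomain R] {M : Matrix ι ι R} :
    (∃ g ≠ 0, g ᵥ* M = g) ↔ ∃ a ≠ 0, M *ᵥ a = a := by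
  have hl : ∀ g : ι → R, g ᵥ* (M - 1) = 0 ↔ g ᵥ* M = g := fun g => by
    rw [vecMul_sub, vecMul_one, sub_eq_zero]
  have hr : ∀ a : ι → R, (M - 1) *ᵥ a = 0 ↔ M *ᵥ a = a := fun a => by
    rw [sub_mulVec, one_mulVec, sub_eq_zero]
  simp only [← hl, ← hr, exists_vecMul_eq_zero_iff, exists_mulVec_eq_zero_iff]

end Matrix

theorem commutator_le_of_closure_eq_top {G : Type*} [Group G] {N : Subgroup G} [N.Normal]
    {s : Set G} (hs : Subgroup.closure s = ⊤) (h : ∀ a ∈ s, ∀ b ∈ s, ⁅a, b⁆ ∈ N) :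
    commutator G ≤ N := by
  rw [← Subgroup.Normal.quotient_commutative_iff_commutator_le]
  set S : Set (G ⧸ N) := QuotientGroup.mk' N '' s
  have hS : Subgroup.closure S = ⊤ := by
    rw [← MonoidHom.map_closure, hs, ← MonoidHom.range_eq_map, QuotientGroup.range_mk']
  have hSS : S ⊆ Subgroup.centralizer S := by
    rintro _ ⟨a, ha, rfl⟩ _ ⟨b, hb, rfl⟩
    have : ⁅QuotientGroup.mk' N b, QuotientGroup.mk' N a⁆ = 1 := by
      rw [← map_commutatorElement, QuotientGroup.mk'_apply, QuotientGroup.eq_one_iff]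
      exact h b hb a ha
    exact commutatorElement_eq_one_iff_mul_comm.mp this
  refine ⟨⟨fun x y => ?_⟩⟩
  have hx := Subgroup.closure_le_centralizer_centralizer S (hS ▸ Subgroup.mem_top x)
  have hy := (Subgroup.closure_le _).mpr hSS (hS ▸ Subgroup.mem_top y)
  exact (Subgroup.mem_centralizer_iff.mp hx y hy).symm

@[ext]
structure BilinExt {A B : Type*} [AddCommGroup A] [AddCommGroup B] (ω : A →+ A →+ B) where
  fst : A
  snd : B

namespace BilinExt

variable {A B : Type*} [AddCommGroup A] [AddCommGroup B] {ω : A →+ A →+ B}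

instance : Mul (BilinExt ω) := ⟨fun g h => ⟨g.fst + h.fst, g.snd + h.snd + ω g.fst h.fst⟩⟩
instance : One (BilinExt ω) := ⟨⟨0, 0⟩⟩
instance : Inv (BilinExt ω) := ⟨fun g => ⟨-g.fst, -g.snd + ω g.fst g.fst⟩⟩

@[simp] theorem mul_fst (g h : BilinExt ω) : (g * h).fst = g.fst + h.fst := rfl
@[simp] theorem mul_snd (g h : BilinExt ω) : (g * h).snd = g.snd + h.snd + ω g.fst h.fst := rfl
@[simp] theorem one_fst : (1 : BilinExt ω).fst = 0 := rfl
@[simp] theorem one_snd : (1 : BilinExt ω).snd = 0 := rfl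
@[simp] theorem inv_fst (g : BilinExt ω) : g⁻¹.fst = -g.fst := rfl
@[simp] theorem inv_snd (g : BilinExt ω) : g⁻¹.snd = -g.snd + ω g.fst g.fst := rfl

instance : Group (BilinExt ω) where
  mul_assoc g h k := by ext <;> simp <;> abel
  one_mul g := by ext <;> simp
  mul_one g := by ext <;> simp
  inv_mul_cancel g := by ext <;> simp

theorem commutatorElement_eq (g h : BilinExt ω) :
    ⁅g, h⁆ = ⟨0, ω g.fst h.fst - ω h.fst g.fst⟩ := by
  rw [commutatorElement_def]
  ext
  · simp
  · simp
    abel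

def fstHom : BilinExt ω →* Multiplicative A where
  toFun g := .ofAdd g.fst
  map_one' := rfl
  map_mul' _ _ := rfl

theorem zpow_fst (g : BilinExt ω) (m : ℤ) : (g ^ m).fst = m • g.fst :=
  congrArg Multiplicative.toAdd (map_zpow fstHom g m)

def ofSnd : Multiplicative B →* BilinExt ω where
  toFun b := ⟨0, b.toAdd⟩
  map_one' := rfl
  map_mul' _ _ := by ext <;> simp

theorem zpow_snd_of_fst_eq_zero {g : BilinExt ω} (hg : g.fst = 0) (m : ℤ) :
    (g ^ m).snd = m • g.snd := by
  have : g = ofSnd (.ofAdd g.snd) := BilinExt.ext hg rfl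
  rw [this, ← map_zpow]
  rfl

theorem snd_mul_of_fst_eq_zero {g : BilinExt ω} (h : BilinExt ω) (hg : g.fst = 0) :
    (g * h).snd = g.snd + h.snd := by
  simp [hg]

theorem snd_inv_of_fst_eq_zero {g : BilinExt ω} (hg : g.fst = 0) : g⁻¹.snd = -g.snd := by
  simp [hg]

end BilinExt

theorem SimpleGraph.exists_compl_adj_of_unique_max_degree {V : Type*} [Fintype V] [DecidableEq V]
    (Γ : SimpleGraph V) [DecidableRel Γ.Adj]
    (hmax : ∀ v, (Γ.degree v : ℤ) ≤ Fintype.card V - 2)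
    (huniq : ∃! v, (Γ.degree v : ℤ) = Fintype.card V - 2) :
    ∃ v w, (∀ u, Γᶜ.Adj v u ↔ u = w) ∧
      ∀ k, k ≠ v → ∃ l₁ l₂, l₁ ≠ l₂ ∧ Γᶜ.Adj k l₁ ∧ Γᶜ.Adj k l₂ := by
  have hcompl (k : V) : (Γᶜ.degree k : ℤ) = Fintype.card V - 1 - Γ.degree k := by
    have := Γ.degree_lt_card_verts k
    rw [degree_compl]
    omega
  obtain ⟨v, hv, hvuniq⟩ := huniq
  obtain ⟨w, hw, hwuniq⟩ := (Γᶜ.degree_eq_one_iff_existsUnique_adj (v := v)).mp (by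
    have := hcompl v
    omega)
  refine ⟨v, w, fun u => ⟨hwuniq u, fun h => h ▸ hw⟩, fun k hk => ?_⟩
  have h2 : 1 < (Γᶜ.neighborFinset k).card := by
    have := hcompl k
    have := hmax k
    have : (Γ.degree k : ℤ) ≠ Fintype.card V - 2 := fun h => hk (hvuniq k h)
    rw [card_neighborFinset_eq_degree]
    omega
  obtain ⟨l₁, h₁, l₂, h₂, h12⟩ := Finset.one_lt_card.mp h2
  exact ⟨l₁, l₂, h12, (mem_neighborFinset _ _ _).mp h₁, (mem_neighborFinset _ _ _).mp h₂⟩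

section NonEdge

variable {V : Type} [LinearOrder V] {Γ : SimpleGraph V} {v w : V}

theorem nonEdge_val_eq_of_mem (hv : ∀ u, Γᶜ.Adj v u → u = w) {p : NonEdge Γ}
    (hp : p.1.1 = v ∨ p.1.2 = v) : p.1 = (min v w, max v w) := by
  obtain ⟨⟨a, b⟩, hab, hadj⟩ := p
  rcases hp with rfl | rfl
  · obtain rfl : b = w := hv b ((Γ.compl_adj _ _).mpr ⟨hab.ne, hadj⟩)
    simp [hab.le]
  · obtain rfl : a = w := hv a ((Γ.compl_adj _ _).mpr ⟨hab.ne', fun h => hadj h.symm⟩)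
    simp [hab.le]

theorem nonEdge_eq_of_mem (hv : ∀ u, Γᶜ.Adj v u → u = w) {p q : NonEdge Γ}
    (hp : p.1.1 = v ∨ p.1.2 = v) (hq : q.1.1 = v ∨ q.1.2 = v) : p = q :=
  Subtype.ext ((nonEdge_val_eq_of_mem hv hp).trans (nonEdge_val_eq_of_mem hv hq).symm)

end NonEdge

def EdgeMinorsVanish {V R : Type*} [Mul R] (Γ : SimpleGraph V) (X : Matrix V V R) : Prop :=
  ∀ ⦃i j⦄, Γ.Adj i j → ∀ ⦃k l⦄, ¬Γ.Adj k l → X k i * X l j = X k j * X l i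

def compoundMatrix {V : Type} {R : Type*} [LinearOrder V] [CommRing R] (Γ : SimpleGraph V)
    (A : Matrix V V R) : Matrix (NonEdge Γ) (NonEdge Γ) R :=
  Matrix.of fun q p => A q.1.2 p.1.2 * A q.1.1 p.1.1 - A q.1.2 p.1.1 * A q.1.1 p.1.2

namespace EdgeMinorsVanish

variable {V R : Type*} [DecidableEq V] [CommRing R] {Γ : SimpleGraph V} {X X' : Matrix V V R}
  {v w : V}

theorem smul_row_sub_smul_row (hX : EdgeMinorsVanish Γ X) (hv : ∀ u, Γᶜ.Adj v u → u = w)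
    {k l : V} (hkl : ¬Γ.Adj k l) :
    X k v • X l - X l v • X k = (X k v * X l w - X l v * X k w) • Pi.single w 1 := by
  funext u
  simp only [Pi.sub_apply, Pi.smul_apply, smul_eq_mul, Pi.single_apply]
  by_cases huw : u = w
  · simp [huw]
  by_cases huv : u = v
  · rw [huv] at huw ⊢
    simp [huw, mul_comm]
  have hvu : Γ.Adj v u := by
    by_contra h
    exact huw (hv u ((Γ.compl_adj v u).mpr ⟨Ne.symm huv, h⟩))
  simp only [huw, if_false, mul_zero]
  linear_combination hX hvu hkl

variable [Fintype V]

theorem smul_single_sub_smul_single (hX : EdgeMinorsVanish Γ X) (hv : ∀ u, Γᶜ.Adj v u → u = w)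
    (hXX' : X * X' = 1) {k l : V} (hkl : ¬Γ.Adj k l) :
    X k v • Pi.single l 1 - X l v • Pi.single k 1 = (X k v * X l w - X l v * X k w) • X' w := by
  have := congrArg (· ᵥ* X') (hX.smul_row_sub_smul_row hv hkl)
  simp only [sub_vecMul, smul_vecMul, row_vecMul_of_mul_eq_one hXX', single_one_vecMul] at this
  exact this

theorem right_inv_apply_eq_zero [IsDomain R] (hX : EdgeMinorsVanish Γ X)
    (hv : ∀ u, Γᶜ.Adj v u → u = w) (hXX' : X * X' = 1) {k l : V} (hkl : Γᶜ.Adj k l)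
    (hk : X k v ≠ 0) {j : V} (hjk : j ≠ k) (hjl : j ≠ l) : X' w j = 0 := by
  obtain ⟨hne, hkl⟩ := (Γ.compl_adj k l).mp hkl
  have h := hX.smul_single_sub_smul_single hv hXX' hkl
  have hl := congrFun h l
  have hj := congrFun h j
  simp only [Pi.sub_apply, Pi.smul_apply, smul_eq_mul, Pi.single_eq_same,
    Pi.single_eq_of_ne hne.symm, Pi.single_eq_of_ne hjk, Pi.single_eq_of_ne hjl] at hl hj
  have hD : X k v * X l w - X l v * X k w ≠ 0 := by
    rintro hD
    rw [hD, zero_mul] at hl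
    exact hk (by simpa using hl)
  exact (mul_eq_zero.mp (by simpa using hj.symm)).resolve_left hD

theorem apply_eq_zero_of_ne [IsDomain R] (hX : EdgeMinorsVanish Γ X)
    (hv : ∀ u, Γᶜ.Adj v u → u = w) (hvw : v ≠ w)
    (hdeg : ∀ k, k ≠ v → ∃ l₁ l₂, l₁ ≠ l₂ ∧ Γᶜ.Adj k l₁ ∧ Γᶜ.Adj k l₂)
    (hXX' : X * X' = 1) (hX'X : X' * X = 1) {k : V} (hk : k ≠ v) : X k v = 0 := by
  by_contra hkv
  obtain ⟨l₁, l₂, h12, h1, h2⟩ := hdeg k hk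
  have hrow : X' w = Pi.single k (X' w k) := by
    funext j
    by_cases hjk : j = k
    · rw [hjk, Pi.single_eq_same]
    rw [Pi.single_eq_of_ne hjk]
    by_cases hj1 : j = l₁
    · exact hX.right_inv_apply_eq_zero hv hXX' h2 hkv hjk (hj1 ▸ h12)
    · exact hX.right_inv_apply_eq_zero hv hXX' h1 hkv hjk hj1
  have hw := row_vecMul_of_mul_eq_one hX'X w
  rw [hrow, single_vecMul] at hw
  have hww := congrFun hw w
  have hwv := congrFun hw v
  simp only [Pi.smul_apply, smul_eq_mul, Pi.single_eq_same, Pi.single_eq_of_ne hvw] at hww hwv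
  exact hkv ((mul_eq_zero.mp hwv).resolve_left (left_ne_zero_of_mul_eq_one hww))

end EdgeMinorsVanish

theorem compoundMatrix_mulVec_single_eq_self {V : Type} {R : Type*} [LinearOrder V] [CommRing R]
    {Γ : SimpleGraph V} [Fintype (NonEdge Γ)] {v w : V} {A : Matrix V V R}
    (hv : ∀ u, Γᶜ.Adj v u → u = w) (hvw : v ≠ w) (hcol : ∀ k, k ≠ v → A k v = 0)
    (hdiag : A v v * A w w = 1) {p : NonEdge Γ} (hp : p.1.1 = v ∨ p.1.2 = v) :
    compoundMatrix Γ A *ᵥ Pi.single p 1 = Pi.single p 1 := by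
  rw [mulVec_single_one]
  funext q
  have hwv := hcol w hvw.symm
  have hpv := nonEdge_val_eq_of_mem hv hp
  by_cases hq : q.1.1 = v ∨ q.1.2 = v
  · obtain rfl := nonEdge_eq_of_mem hv hq hp
    rcases le_total v w with h | h <;>
      simp [compoundMatrix, hpv, h, hwv, mul_comm, hdiag]
  · have hqp : q ≠ p := fun h => hq (h ▸ hp)
    obtain ⟨hq₁, hq₂⟩ := not_or.mp hq
    rcases le_total v w with h | h <;>
      simp [compoundMatrix, hpv, h, hqp, hcol _ hq₁, hcol _ hq₂]

theorem EdgeMinorsVanish.exists_mulVec_eq_self_or_compoundMatrix {V : Type} [LinearOrder V]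
    [Fintype V] {Γ : SimpleGraph V} [DecidableRel Γ.Adj] {A A' : Matrix V V ℤ} {v w : V}
    (hA : EdgeMinorsVanish Γ A) (hA' : EdgeMinorsVanish Γ A') (hAA' : A * A' = 1)
    (hA'A : A' * A = 1) (hw : ∀ u, Γᶜ.Adj v u ↔ u = w)
    (hdeg : ∀ k, k ≠ v → ∃ l₁ l₂, l₁ ≠ l₂ ∧ Γᶜ.Adj k l₁ ∧ Γᶜ.Adj k l₂) :
    (∃ a ≠ 0, A *ᵥ a = a) ∨ ∃ e ≠ 0, compoundMatrix Γ A *ᵥ e = e := by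
  have hv (u : V) : Γᶜ.Adj v u → u = w := (hw u).mp
  have hvw' : Γᶜ.Adj v w := (hw w).mpr rfl
  have hvw : v ≠ w := hvw'.ne
  have hcol (k : V) : k ≠ v → A k v = 0 := hA.apply_eq_zero_of_ne hv hvw hdeg hAA' hA'A
  have hvv : A' v v * A v v = 1 := by
    rw [← mul_apply_eq_mul_of_col hcol, hA'A, one_apply_eq]
  have hrow (j : V) (hjw : j ≠ w) : A w j = 0 := by
    rcases eq_or_ne j v with rfl | hjv
    · exact hcol w hvw.symm
    · exact hA'.right_inv_apply_eq_zero hv hA'A hvw' (left_ne_zero_of_mul_eq_one hvv) hjv hjw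
  have hww : A w w * A' w w = 1 := by
    rw [← mul_apply_eq_mul_of_row hrow, hAA', one_apply_eq]
  rcases Int.eq_one_or_neg_one_of_mul_eq_one (mul_comm (A' v v) _ ▸ hvv) with hv1 | hv1
  · refine Or.inl ⟨Pi.single v 1, by simp, ?_⟩
    rw [mulVec_single_one]
    funext k
    rcases eq_or_ne k v with rfl | hk
    · simp [hv1]
    · simp [hcol k hk, hk]
  rcases Int.eq_one_or_neg_one_of_mul_eq_one hww with hw1 | hw1
  · refine Or.inl (exists_vecMul_eq_self_iff.mp ⟨Pi.single w 1, by simp, ?_⟩)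
    rw [single_one_vecMul]
    funext j
    rcases eq_or_ne j w with rfl | hjw
    · simp [hw1]
    · simp [hrow j hjw, hjw]
  have hp : ∃ p : NonEdge Γ, p.1.1 = v ∨ p.1.2 = v := by
    obtain ⟨-, hnadj⟩ := (Γ.compl_adj v w).mp hvw'
    rcases hvw.lt_or_gt with h | h
    · exact ⟨⟨(v, w), h, hnadj⟩, Or.inl rfl⟩
    · exact ⟨⟨(w, v), h, fun h' => hnadj h'.symm⟩, Or.inr rfl⟩
  obtain ⟨p, hp⟩ := hp
  exact Or.inr ⟨Pi.single p 1, by simp, compoundMatrix_mulVec_single_eq_self hv hvw hcol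
    (by rw [hv1, hw1]; norm_num) hp⟩

namespace GraphGroup

variable {V : Type} [LinearOrder V] {Γ : SimpleGraph V}

theorem commutatorElement_xg_of_adj {i j : V} (h : Γ.Adj i j) : ⁅xg Γ j, xg Γ i⁆ = 1 := by
  have := PresentedGroup.one_of_mem (rels := GraphRels Γ)
    (x := ⁅FreeGroup.of (Sum.inl j), FreeGroup.of (Sum.inl i)⁆) (Or.inl ⟨i, j, h, rfl⟩)
  rwa [map_commutatorElement] at this

theorem commutatorElement_xg_nonEdge (p : NonEdge Γ) : ⁅xg Γ p.1.2, xg Γ p.1.1⁆ = yg Γ p :=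
  PresentedGroup.mk_eq_mk_of_mul_inv_mem (Or.inr (Or.inl ⟨p, rfl⟩))

theorem commute_xg_yg (l : V) (p : NonEdge Γ) : Commute (xg Γ l) (yg Γ p) := by
  have := PresentedGroup.one_of_mem (rels := GraphRels Γ)
    (x := ⁅FreeGroup.of (Sum.inl l), FreeGroup.of (Sum.inr p)⁆) (Or.inr (Or.inr ⟨l, p, rfl⟩))
  rwa [map_commutatorElement, commutatorElement_eq_one_iff_commute] at this

theorem yg_mem_center (p : NonEdge Γ) : yg Γ p ∈ Subgroup.center (GraphGroup Γ) := by
  have hx (l : V) : Commute (xg Γ l) (yg Γ p) := commute_xg_yg l p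
  have hgen (s : GraphGens Γ) : PresentedGroup.of s ∈ Subgroup.centralizer {yg Γ p} := by
    rw [Subgroup.mem_centralizer_singleton_iff]
    rcases s with l | q
    · exact (hx l).eq
    · change yg Γ q * yg Γ p = yg Γ p * yg Γ q
      rw [← commutatorElement_xg_nonEdge q, commutatorElement_def]
      exact (((hx _).mul_left (hx _)).mul_left (hx _).inv_left).mul_left (hx _).inv_left |>.eq
  exact Subgroup.mem_center_iff.mpr fun g => Subgroup.mem_centralizer_singleton_iff.mp
    (PresentedGroup.generated_by _ _ hgen g)

variable (Γ) in
def ySubgroup : Subgroup (GraphGroup Γ) := Subgroup.closure (Set.range (yg Γ))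

theorem yg_mem_ySubgroup (p : NonEdge Γ) : yg Γ p ∈ ySubgroup Γ :=
  Subgroup.subset_closure ⟨p, rfl⟩

theorem ySubgroup_le_center : ySubgroup Γ ≤ Subgroup.center (GraphGroup Γ) :=
  (Subgroup.closure_le _).mpr (Set.range_subset_iff.mpr yg_mem_center)

instance : (ySubgroup Γ).Normal :=
  ⟨fun z hz g => by rwa [Subgroup.mem_center_iff.mp (ySubgroup_le_center hz) g,
    mul_inv_cancel_right]⟩

theorem commutatorElement_xg_mem_ySubgroup (i j : V) : ⁅xg Γ i, xg Γ j⁆ ∈ ySubgroup Γ := by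
  by_cases hadj : Γ.Adj j i
  · rw [commutatorElement_xg_of_adj hadj]
    exact one_mem _
  rcases lt_trichotomy i j with h | rfl | h
  · rw [← commutatorElement_inv, commutatorElement_xg_nonEdge ⟨(i, j), h, fun h' => hadj h'.symm⟩]
    exact inv_mem (yg_mem_ySubgroup _)
  · rw [commutatorElement_self]
    exact one_mem _
  · exact commutatorElement_xg_nonEdge ⟨(j, i), h, hadj⟩ ▸ yg_mem_ySubgroup _

theorem commutator_le_ySubgroup : commutator (GraphGroup Γ) ≤ ySubgroup Γ := by
  refine commutator_le_of_closure_eq_top (PresentedGroup.closure_range_of _) ?_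
  have hy (p : NonEdge Γ) (g : GraphGroup Γ) : ⁅g, yg Γ p⁆ ∈ ySubgroup Γ := by
    rw [commutatorElement_eq_one_iff_mul_comm.mpr (Subgroup.mem_center_iff.mp (yg_mem_center p) g)]
    exact one_mem _
  rintro _ ⟨i | p, rfl⟩ _ ⟨j | q, rfl⟩
  · exact commutatorElement_xg_mem_ySubgroup i j
  · exact hy q _
  · rw [← commutatorElement_inv]
    exact inv_mem (hy p _)
  · exact hy q _

-- Chosen so that `⁅x_j, x_i⁆ ↦ (0, e_{(i, j)})` for every non-edge `i < j`.
variable (Γ) in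
def cocycle : (V → ℤ) →+ (V → ℤ) →+ (NonEdge Γ → ℤ) :=
  AddMonoidHom.mk'
    (fun a => AddMonoidHom.mk' (fun b p => a p.1.2 * b p.1.1) fun b c => by
      funext p
      simp [mul_add])
    fun a b => AddMonoidHom.ext fun c => by
      funext p
      simp [add_mul]

theorem cocycle_apply (a b : V → ℤ) (p : NonEdge Γ) :
    cocycle Γ a b p = a p.1.2 * b p.1.1 := rfl

theorem cocycle_single_single (i j : V) (q : NonEdge Γ) :
    cocycle Γ (Pi.single j 1) (Pi.single i 1) q = if q.1 = (i, j) then 1 else 0 := by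
  simp only [cocycle_apply, Pi.single_apply, Prod.ext_iff]
  split_ifs <;> simp_all

def modelGen : GraphGens Γ → BilinExt (cocycle Γ)
  | .inl i => ⟨Pi.single i 1, 0⟩
  | .inr p => ⟨0, Pi.single p 1⟩

theorem modelGen_rels : ∀ r ∈ GraphRels Γ, FreeGroup.lift modelGen r = 1 := by
  rintro r (⟨i, j, hij, rfl⟩ | ⟨p, rfl⟩ | ⟨l, p, rfl⟩) <;>
    simp only [map_mul, map_inv, map_commutatorElement, FreeGroup.lift_apply_of, modelGen,
      BilinExt.commutatorElement_eq]
  · ext q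
    · rfl
    · have h1 : q.1 ≠ (i, j) := fun h => q.2.2 (h ▸ hij)
      have h2 : q.1 ≠ (j, i) := fun h => q.2.2 (h ▸ hij.symm)
      simp [cocycle_single_single, h1, h2]
  · ext q
    · simp
    · have h : q.1 ≠ (p.1.2, p.1.1) := fun h => (q.2.1.trans (h ▸ p.2.1 : _)).false
      simp [cocycle_single_single, h, Pi.single_apply, Subtype.ext_iff]
  · ext <;> simp

def toModel : GraphGroup Γ →* BilinExt (cocycle Γ) := PresentedGroup.toGroup modelGen_rels

def coordX (g : GraphGroup Γ) : V → ℤ := (toModel g).fst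

def coordY (g : GraphGroup Γ) : NonEdge Γ → ℤ := (toModel g).snd

theorem coordX_mul (g h : GraphGroup Γ) : coordX (g * h) = coordX g + coordX h := by
  simp [coordX]

theorem coordX_inv (g : GraphGroup Γ) : coordX g⁻¹ = -coordX g := by
  simp [coordX]

theorem coordX_zpow (g : GraphGroup Γ) (m : ℤ) : coordX (g ^ m) = m • coordX g := by
  simp [coordX, BilinExt.zpow_fst]

theorem coordX_xg (i : V) : coordX (xg Γ i) = Pi.single i 1 := by
  simp [coordX, toModel, xg, modelGen]

theorem coordX_yg (p : NonEdge Γ) : coordX (yg Γ p) = 0 := by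
  simp [coordX, toModel, yg, modelGen]

theorem coordX_commutatorElement (g h : GraphGroup Γ) : coordX ⁅g, h⁆ = 0 := by
  simp [coordX, BilinExt.commutatorElement_eq]

theorem coordY_commutatorElement (g h : GraphGroup Γ) :
    coordY ⁅g, h⁆ = cocycle Γ (coordX g) (coordX h) - cocycle Γ (coordX h) (coordX g) := by
  simp [coordY, coordX, BilinExt.commutatorElement_eq]

theorem coordY_mul_of_coordX_eq_zero {g : GraphGroup Γ} (h : GraphGroup Γ) (hg : coordX g = 0) :
    coordY (g * h) = coordY g + coordY h := by
  simpa [coordY] using BilinExt.snd_mul_of_fst_eq_zero (toModel h) hg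

theorem coordY_inv_of_coordX_eq_zero {g : GraphGroup Γ} (hg : coordX g = 0) :
    coordY g⁻¹ = -coordY g := by
  simpa [coordY] using BilinExt.snd_inv_of_fst_eq_zero hg

theorem coordY_yg_zpow (p : NonEdge Γ) (m : ℤ) : coordY (yg Γ p ^ m) = m • Pi.single p 1 := by
  simpa [coordY, toModel, yg, modelGen] using
    BilinExt.zpow_snd_of_fst_eq_zero (coordX_yg (Γ := Γ) p) m

theorem coordY_yg (p : NonEdge Γ) : coordY (yg Γ p) = Pi.single p 1 := by
  simpa using coordY_yg_zpow p 1

theorem coordX_eq_zero_of_mem_ySubgroup {z : GraphGroup Γ} (hz : z ∈ ySubgroup Γ) :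
    coordX z = 0 := by
  induction hz using Subgroup.closure_induction with
  | mem _ h => obtain ⟨p, rfl⟩ := h; exact coordX_yg p
  | one => simp [coordX]
  | mul _ _ _ _ ha hb => rw [coordX_mul, ha, hb, add_zero]
  | inv _ _ ha => rw [coordX_inv, ha, neg_zero]

def abelMatrix (φ : GraphGroup Γ →* GraphGroup Γ) : Matrix V V ℤ :=
  Matrix.of fun i j => coordX (φ (xg Γ j)) i

theorem edgeMinorsVanish_abelMatrix (φ : GraphGroup Γ →* GraphGroup Γ) :
    EdgeMinorsVanish Γ (abelMatrix φ) := by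
  intro i j hij k l hkl
  have h (q : NonEdge Γ) : abelMatrix φ q.1.2 j * abelMatrix φ q.1.1 i =
      abelMatrix φ q.1.2 i * abelMatrix φ q.1.1 j := by
    have := congrFun (congrArg coordY (congrArg φ (commutatorElement_xg_of_adj hij))) q
    rw [map_commutatorElement, coordY_commutatorElement, map_one] at this
    simpa [coordY, cocycle_apply, sub_eq_zero, abelMatrix] using this
  rcases lt_trichotomy k l with hlt | rfl | hlt
  · linear_combination h ⟨(k, l), hlt, hkl⟩
  · ring
  · linear_combination -h ⟨(l, k), hlt, fun h' => hkl h'.symm⟩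

variable [Fintype V]

theorem mem_ySubgroup_of_coordX_eq_zero {g : GraphGroup Γ} (hg : coordX g = 0) :
    g ∈ ySubgroup Γ := by
  let σ : (V → ℤ) →+ Additive (Abelianization (GraphGroup Γ)) :=
    (Fintype.linearCombination ℤ fun i =>
      Additive.ofMul (Abelianization.of (xg Γ i))).toAddMonoidHom
  have hσ : (AddMonoidHom.toMultiplicativeLeft σ).comp (BilinExt.fstHom.comp toModel) =
      Abelianization.of := by
    refine PresentedGroup.ext fun s => ?_
    rcases s with i | p
    · change Additive.toMul (σ (coordX (xg Γ i))) = Abelianization.of (xg Γ i)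
      simp [σ, coordX_xg, Fintype.linearCombination_apply_single]
    · change Additive.toMul (σ (coordX (yg Γ p))) = Abelianization.of (yg Γ p)
      rw [coordX_yg, map_zero, ← commutatorElement_xg_nonEdge, map_commutatorElement,
        commutatorElement_eq_one_iff_mul_comm.mpr (mul_comm _ _)]
      rfl
  apply commutator_le_ySubgroup
  rw [← Abelianization.ker_of, MonoidHom.mem_ker, ← hσ]
  change Additive.toMul (σ (coordX g)) = 1
  rw [hg, map_zero]
  rfl

theorem abelMatrix_mulVec_single (φ : GraphGroup Γ →* GraphGroup Γ) (j : V) :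
    abelMatrix φ *ᵥ Pi.single j 1 = coordX (φ (xg Γ j)) :=
  Matrix.mulVec_single_one _ _

theorem coordX_map (φ : GraphGroup Γ →* GraphGroup Γ) (g : GraphGroup Γ) :
    coordX (φ g) = abelMatrix φ *ᵥ coordX g := by
  have h : ((BilinExt.fstHom.comp toModel).comp φ : GraphGroup Γ →* Multiplicative (V → ℤ)) =
      (AddMonoidHom.toMultiplicative (abelMatrix φ).mulVecLin.toAddMonoidHom).comp
        (BilinExt.fstHom.comp toModel) := by
    refine PresentedGroup.ext fun s => congrArg Multiplicative.ofAdd ?_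
    rcases s with j | p
    · exact (abelMatrix_mulVec_single φ j).symm.trans (congrArg _ (coordX_xg j).symm)
    · change coordX (φ (yg Γ p)) = abelMatrix φ *ᵥ coordX (yg Γ p)
      rw [coordX_yg, Matrix.mulVec_zero, ← commutatorElement_xg_nonEdge, map_commutatorElement,
        coordX_commutatorElement]
  exact congrArg Multiplicative.toAdd (DFunLike.congr_fun h g)

theorem abelMatrix_comp (ψ φ : GraphGroup Γ →* GraphGroup Γ) :
    abelMatrix (ψ.comp φ) = abelMatrix ψ * abelMatrix φ :=
  Matrix.ext_of_mulVec_single fun j => by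
    rw [← mulVec_mulVec, abelMatrix_mulVec_single, abelMatrix_mulVec_single, ← coordX_map]
    rfl

theorem abelMatrix_id : abelMatrix (MonoidHom.id (GraphGroup Γ)) = 1 :=
  Matrix.ext_of_mulVec_single fun j => by
    rw [abelMatrix_mulVec_single, one_mulVec]
    exact coordX_xg j

theorem abelMatrix_symm_mul (φ : GraphGroup Γ ≃* GraphGroup Γ) :
    abelMatrix φ.symm.toMonoidHom * abelMatrix φ.toMonoidHom = 1 := by
  rw [← abelMatrix_comp, MulEquiv.toMonoidHom_eq_coe, MulEquiv.toMonoidHom_eq_coe,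
    MulEquiv.coe_monoidHom_symm_comp_coe_monoidHom, abelMatrix_id]

theorem abelMatrix_mul_symm (φ : GraphGroup Γ ≃* GraphGroup Γ) :
    abelMatrix φ.toMonoidHom * abelMatrix φ.symm.toMonoidHom = 1 := by
  simpa using abelMatrix_symm_mul φ.symm

theorem coordY_map [DecidableRel Γ.Adj] (φ : GraphGroup Γ →* GraphGroup Γ) {z : GraphGroup Γ}
    (hz : z ∈ ySubgroup Γ) : coordY (φ z) = compoundMatrix Γ (abelMatrix φ) *ᵥ coordY z := by
  have hφ {a : GraphGroup Γ} (ha : a ∈ ySubgroup Γ) : coordX (φ a) = 0 := by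
    rw [coordX_map, coordX_eq_zero_of_mem_ySubgroup ha, mulVec_zero]
  induction hz using Subgroup.closure_induction with
  | mem _ h =>
    obtain ⟨p, rfl⟩ := h
    rw [coordY_yg, mulVec_single_one, ← commutatorElement_xg_nonEdge, map_commutatorElement,
      coordY_commutatorElement]
    funext q
    simp [cocycle_apply, compoundMatrix, abelMatrix]
  | one => simp [coordY]
  | mul a b ha hb iha ihb =>
    rw [map_mul, coordY_mul_of_coordX_eq_zero _ (hφ ha), coordY_mul_of_coordX_eq_zero _
      (coordX_eq_zero_of_mem_ySubgroup ha), iha, ihb, mulVec_add]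
  | inv a ha iha =>
    rw [map_inv, coordY_inv_of_coordX_eq_zero (hφ ha),
      coordY_inv_of_coordX_eq_zero (coordX_eq_zero_of_mem_ySubgroup ha), iha, mulVec_neg]

theorem coordX_twisted (φ : GraphGroup Γ →* GraphGroup Γ) (b c : GraphGroup Γ) :
    coordX (c * b * (φ c)⁻¹) = coordX b + (coordX c - abelMatrix φ *ᵥ coordX c) := by
  rw [coordX_mul, coordX_mul, coordX_inv, coordX_map]
  abel

theorem coordY_twisted [DecidableRel Γ.Adj] (φ : GraphGroup Γ →* GraphGroup Γ)
    {b c : GraphGroup Γ} (hb : coordX b = 0) (hc : c ∈ ySubgroup Γ) :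
    coordY (c * b * (φ c)⁻¹) =
      coordY b + (coordY c - compoundMatrix Γ (abelMatrix φ) *ᵥ coordY c) := by
  have hc0 := coordX_eq_zero_of_mem_ySubgroup hc
  have hφc : coordX (φ c) = 0 := by rw [coordX_map, hc0, mulVec_zero]
  rw [coordY_mul_of_coordX_eq_zero _ (by rw [coordX_mul, hc0, hb, add_zero]),
    coordY_mul_of_coordX_eq_zero _ hc0,
    coordY_inv_of_coordX_eq_zero hφc, coordY_map φ hc]
  abel

theorem reidemeisterNumber_eq_top_of_mulVec_eq_self (φ : GraphGroup Γ →* GraphGroup Γ)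
    (hA : ∃ a ≠ 0, abelMatrix φ *ᵥ a = a) : reidemeisterNumber φ = ⊤ := by
  obtain ⟨g, hg, hgA⟩ := exists_vecMul_eq_self_iff.mpr hA
  obtain ⟨i, hi⟩ := Function.ne_iff.mp hg
  refine reidemeisterNumber_eq_top_of_injective φ (fun m : ℤ => xg Γ i ^ m)
    fun m₁ m₂ ⟨c, hc⟩ => ?_
  have := congrArg (g ⬝ᵥ coordX ·) hc
  simp only [coordX_twisted, dotProduct_add, dotProduct_sub_mulVec_eq_zero hgA, add_zero,
    coordX_zpow, coordX_xg, dotProduct_smul, dotProduct_single, mul_one, smul_eq_mul] at this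
  exact mul_right_cancel₀ hi this

theorem reidemeisterNumber_eq_top_of_compoundMatrix_mulVec_eq_self [DecidableRel Γ.Adj]
    (φ : GraphGroup Γ →* GraphGroup Γ) (hA : ∀ a, abelMatrix φ *ᵥ a = a → a = 0)
    (hC : ∃ e ≠ 0, compoundMatrix Γ (abelMatrix φ) *ᵥ e = e) : reidemeisterNumber φ = ⊤ := by
  obtain ⟨g, hg, hgC⟩ := exists_vecMul_eq_self_iff.mpr hC
  obtain ⟨p, hp⟩ := Function.ne_iff.mp hg
  have hy (m : ℤ) : coordX (yg Γ p ^ m) = 0 := by rw [coordX_zpow, coordX_yg, smul_zero]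
  refine reidemeisterNumber_eq_top_of_injective φ (fun m : ℤ => yg Γ p ^ m)
    fun m₁ m₂ ⟨c, hc⟩ => ?_
  have hc0 : coordX c = 0 := by
    have := congrArg coordX hc
    rw [coordX_twisted, hy, hy, zero_add, eq_comm, sub_eq_zero] at this
    exact hA _ this.symm
  have := congrArg (g ⬝ᵥ coordY ·) hc
  simp only [coordY_twisted φ (hy m₂) (mem_ySubgroup_of_coordX_eq_zero hc0), dotProduct_add,
    dotProduct_sub_mulVec_eq_zero hgC, add_zero, coordY_yg_zpow, dotProduct_smul,
    dotProduct_single, mul_one, smul_eq_mul] at this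
  exact mul_right_cancel₀ hp this

end GraphGroup

/-- If the maximal degree of `Γ` is `n - 2` and exactly one vertex attains this degree,
then `G_Γ` has the `R∞`-property. -/
theorem graphGroup_Rinfty_of_unique_max_degree
    {n : ℕ} (Γ : SimpleGraph (Fin n)) [DecidableRel Γ.Adj]
    (hmax : ∀ v, (Γ.degree v : ℤ) ≤ (n : ℤ) - 2)
    (huniq : ∃! v : Fin n, (Γ.degree v : ℤ) = (n : ℤ) - 2) :
    ∀ φ : GraphGroup Γ ≃* GraphGroup Γ, reidemeisterNumber φ.toMonoidHom = ⊤ := by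
  intro φ
  obtain ⟨v, w, hw, hdeg⟩ := Γ.exists_compl_adj_of_unique_max_degree (by simpa using hmax)
    (by simpa using huniq)
  have hA := GraphGroup.edgeMinorsVanish_abelMatrix φ.toMonoidHom
  have hA' := GraphGroup.edgeMinorsVanish_abelMatrix φ.symm.toMonoidHom
  by_cases hfix : ∃ a ≠ 0, GraphGroup.abelMatrix φ.toMonoidHom *ᵥ a = a
  · exact GraphGroup.reidemeisterNumber_eq_top_of_mulVec_eq_self _ hfix
  · refine GraphGroup.reidemeisterNumber_eq_top_of_compoundMatrix_mulVec_eq_self _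
      (fun a ha => by_contra fun h => hfix ⟨a, h, ha⟩) ?_
    exact (hA.exists_mulVec_eq_self_or_compoundMatrix hA' (GraphGroup.abelMatrix_mul_symm φ)
      (GraphGroup.abelMatrix_symm_mul φ) hw hdeg).resolve_left hfix
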